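/- Let v, ṽ : ℝ^d → ℝ^m be outputs of single-hidden-layer ReLU networks, so v_j = p_j − q_j and ṽ_j = p̃_j − q̃_j with positive/negative tropical polynomials having extended Newton polytopes P_j, Q_j, P̃_j, Q̃_j. Then (1/ρ)·max_{x ∈ B} ‖v(x) − ṽ(x)‖₁ ≤ ∑_{j=1}^m ( H(P_j, P̃_j) + H(Q_j, Q̃_j) ), where B = {x : ‖x‖ ≤ r} and ρ = √(r² + 1). -/

import Mathlib

/-!
Homogenize: for `u = (x, 1) ∈ ℝ^{d+1}` each hidden unit `max (⟪a, x⟫ + b) 0` is the supremum of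
`⟪u, ·⟫` over the segment `[0, (a, b)]`. Suprema of a linear functional add up under Minkowski
sums, so `p_j(x)` and `q_j(x)` are the support functions of the zonotopes `P_j`, `Q_j` at `u`.
A support function of compact sets is Lipschitz in the Hausdorff distance,
`|h_A(u) - h_B(u)| ≤ H(A, B) ‖u‖`, and `‖u‖ = √(‖x‖² + 1) ≤ √(r² + 1)`.
-/

open scoped Pointwise RealInnerProductSpace
open Finset Metric

section Zonotope

variable {E : Type*} [NormedAddCommGroup E] [InnerProductSpace ℝ E] {ι : Type*}

def zonotope (s : Finset ι) (g : ι → E) : Set E := ∑ i ∈ s, segment ℝ 0 (g i)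

theorem isCompact_zonotope (s : Finset ι) (g : ι → E) : IsCompact (zonotope s g) := by
  classical
  induction s using Finset.induction with
  | empty => exact isCompact_singleton
  | insert i s hi ih =>
    rw [zonotope, sum_insert hi, segment_eq_image_lineMap]
    exact (isCompact_Icc.image AffineMap.lineMap_continuous).add ih

theorem isLUB_finsetSum {G : Type*} [AddCommGroup G] [Preorder G] [AddLeftMono G]
    {s : Finset ι} {S : ι → Set G} {a : ι → G}
    (h : ∀ i ∈ s, IsLUB (S i) (a i)) : IsLUB (∑ i ∈ s, S i) (∑ i ∈ s, a i) := by
  classical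
  induction s using Finset.induction with
  | empty => exact isLUB_singleton
  | insert i s hi ih =>
    rw [sum_insert hi, sum_insert hi]
    exact (h i (mem_insert_self i s)).add (ih fun j hj => h j (mem_insert_of_mem hj))

theorem isLUB_inner_segment_zero (u g : E) :
    IsLUB ((⟪u, ·⟫) '' segment ℝ 0 g) (max ⟪u, g⟫ 0) := by
  rw [← coe_innerSL_apply, ← ContinuousLinearMap.coe_coe, ← LinearMap.coe_toAffineMap,
    image_segment]
  simp only [LinearMap.coe_toAffineMap, ContinuousLinearMap.coe_coe, map_zero,
    coe_innerSL_apply, segment_eq_uIcc]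
  exact max_comm (α := ℝ) .. ▸ isLUB_Icc inf_le_sup

theorem isLUB_inner_zonotope (u : E) (s : Finset ι) (g : ι → E) :
    IsLUB ((⟪u, ·⟫) '' zonotope s g) (∑ i ∈ s, max ⟪u, g i⟫ 0) := by
  rw [zonotope, ← coe_innerSL_apply, Set.image_finsetSum]
  exact isLUB_finsetSum fun i _ => isLUB_inner_segment_zero u (g i)

end Zonotope

section Hausdorff

variable {E : Type*} [NormedAddCommGroup E] [InnerProductSpace ℝ E]

theorem IsLUB.le_add_hausdorffDist_mul_norm {A B : Set E} (hA : Bornology.IsBounded A)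
    (hB : IsCompact B) {u : E} {α β : ℝ} (hα : IsLUB ((⟪u, ·⟫) '' A) α)
    (hβ : IsLUB ((⟪u, ·⟫) '' B) β) : α ≤ β + hausdorffDist A B * ‖u‖ := by
  have hB₀ : B.Nonempty := hβ.nonempty.of_image
  have hfin := hausdorffEDist_ne_top_of_nonempty_of_bounded hα.nonempty.of_image hB₀ hA
    hB.isBounded
  refine hα.2 (Set.forall_mem_image.2 fun z hz => ?_)
  obtain ⟨w, hw, hzw⟩ := hB.exists_infDist_eq_dist hB₀ z
  calc ⟪u, z⟫ = ⟪u, w⟫ + ⟪u, z - w⟫ := by rw [inner_sub_right]; ring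
    _ ≤ β + ‖u‖ * ‖z - w‖ :=
      add_le_add (hβ.1 (Set.mem_image_of_mem _ hw)) (real_inner_le_norm _ _)
    _ = β + infDist z B * ‖u‖ := by rw [hzw, dist_eq_norm, mul_comm]
    _ ≤ β + hausdorffDist A B * ‖u‖ := by
      gcongr
      exact infDist_le_hausdorffDist_of_mem hz hfin

theorem IsLUB.abs_sub_le_hausdorffDist_mul_norm {A B : Set E} (hA : IsCompact A)
    (hB : IsCompact B) {u : E} {α β : ℝ} (hα : IsLUB ((⟪u, ·⟫) '' A) α)
    (hβ : IsLUB ((⟪u, ·⟫) '' B) β) : |α - β| ≤ hausdorffDist A B * ‖u‖ := by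
  have h₁ := hα.le_add_hausdorffDist_mul_norm hA.isBounded hB hβ
  have h₂ := hβ.le_add_hausdorffDist_mul_norm hB.isBounded hA hα
  rw [hausdorffDist_comm] at h₂
  exact abs_sub_le_iff.2 ⟨by linarith, by linarith⟩

end Hausdorff

section ReLU

variable {E : Type*} [NormedAddCommGroup E] [InnerProductSpace ℝ E]
  {ι κ : Type*} [Fintype ι] [Fintype κ]

def posZonotope (c : ι → ℝ) (g : ι → E) : Set E := zonotope {i | 0 < c i} fun i => c i • g i

def negZonotope (c : ι → ℝ) (g : ι → E) : Set E := zonotope {i | c i < 0} fun i => |c i| • g i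

theorem sum_mul_eq_sum_pos_sub_sum_neg {R : Type*} [Ring R] [LinearOrder R]
    [IsStrictOrderedRing R] (c f : ι → R) :
    ∑ i, c i * f i = ∑ i with 0 < c i, c i * f i - ∑ i with c i < 0, |c i| * f i := by
  rw [sum_filter, sum_filter, ← sum_sub_distrib]
  refine sum_congr rfl fun i _ => ?_
  rcases lt_trichotomy (c i) 0 with h | h | h
  · simp [h, h.not_gt, abs_of_neg h]
  · simp [h]
  · simp [h, h.not_gt]

theorem max_inner_smul_zero (u g : E) {t : ℝ} (ht : 0 ≤ t) :
    max ⟪u, t • g⟫ 0 = t * max ⟪u, g⟫ 0 := by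
  rw [real_inner_smul_right, mul_max_of_nonneg _ _ ht, mul_zero]

theorem sum_mul_relu_inner_eq (u : E) (c : ι → ℝ) (g : ι → E) :
    ∑ i, c i * max ⟪u, g i⟫ 0 =
      ∑ i with 0 < c i, max ⟪u, c i • g i⟫ 0 - ∑ i with c i < 0, max ⟪u, |c i| • g i⟫ 0 := by
  rw [sum_mul_eq_sum_pos_sub_sum_neg]
  congr 1
  · exact sum_congr rfl fun i hi => (max_inner_smul_zero u (g i) (mem_filter.1 hi).2.le).symm
  · exact sum_congr rfl fun i _ => (max_inner_smul_zero u (g i) (abs_nonneg _)).symm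

theorem abs_sum_mul_relu_inner_sub_le (u : E) (c : ι → ℝ) (g : ι → E) (c' : κ → ℝ)
    (g' : κ → E) :
    |∑ i, c i * max ⟪u, g i⟫ 0 - ∑ i, c' i * max ⟪u, g' i⟫ 0| ≤
      (hausdorffDist (posZonotope c g) (posZonotope c' g') +
        hausdorffDist (negZonotope c g) (negZonotope c' g')) * ‖u‖ := by
  have hP := (isLUB_inner_zonotope u {i | 0 < c i} fun i => c i • g i)
    |>.abs_sub_le_hausdorffDist_mul_norm (isCompact_zonotope _ _) (isCompact_zonotope _ _)
      (isLUB_inner_zonotope u {i | 0 < c' i} fun i => c' i • g' i)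
  have hQ := (isLUB_inner_zonotope u {i | c i < 0} fun i => |c i| • g i)
    |>.abs_sub_le_hausdorffDist_mul_norm (isCompact_zonotope _ _) (isCompact_zonotope _ _)
      (isLUB_inner_zonotope u {i | c' i < 0} fun i => |c' i| • g' i)
  rw [sum_mul_relu_inner_eq, sum_mul_relu_inner_eq, add_mul, posZonotope, posZonotope,
    negZonotope, negZonotope]
  rw [abs_le] at hP hQ ⊢
  constructor <;> linarith [hP.1, hP.2, hQ.1, hQ.2]

end ReLU

section Homogenization

variable {F : Type*} [NormedAddCommGroup F]

theorem inner_toLp_prod_one [InnerProductSpace ℝ F] (x y : F) (t : ℝ) :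
    ⟪WithLp.toLp 2 (x, (1 : ℝ)), WithLp.toLp 2 (y, t)⟫ = ⟪y, x⟫ + t := by
  simp [real_inner_comm]

theorem norm_toLp_prod_one (x : F) : ‖WithLp.toLp 2 (x, (1 : ℝ))‖ = √(‖x‖ ^ 2 + 1) := by
  simp [WithLp.prod_norm_eq_of_L2]

end Homogenization

theorem relu_network_L1_bound_hausdorff_general {d n n' m : ℕ} (r : ℝ)
    (a : Fin n → EuclideanSpace ℝ (Fin d)) (b : Fin n → ℝ) (C : Fin m → Fin n → ℝ)
    (a' : Fin n' → EuclideanSpace ℝ (Fin d)) (b' : Fin n' → ℝ) (C' : Fin m → Fin n' → ℝ) :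
    let W := WithLp 2 (EuclideanSpace ℝ (Fin d) × ℝ)
    let gen : Fin n → W := fun i => (WithLp.equiv 2 _).symm (a i, b i)
    let gen' : Fin n' → W := fun i => (WithLp.equiv 2 _).symm (a' i, b' i)
    let v : Fin m → EuclideanSpace ℝ (Fin d) → ℝ :=
      fun j x => ∑ i, C j i * max ((inner ℝ (a i) x : ℝ) + b i) 0
    let v' : Fin m → EuclideanSpace ℝ (Fin d) → ℝ :=
      fun j x => ∑ i, C' j i * max ((inner ℝ (a' i) x : ℝ) + b' i) 0
    let P : Fin m → Set W := fun j =>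
      ∑ i ∈ Finset.univ.filter (fun i => 0 < C j i), segment ℝ 0 (C j i • gen i)
    let Q : Fin m → Set W := fun j =>
      ∑ i ∈ Finset.univ.filter (fun i => C j i < 0), segment ℝ 0 (|C j i| • gen i)
    let P' : Fin m → Set W := fun j =>
      ∑ i ∈ Finset.univ.filter (fun i => 0 < C' j i), segment ℝ 0 (C' j i • gen' i)
    let Q' : Fin m → Set W := fun j =>
      ∑ i ∈ Finset.univ.filter (fun i => C' j i < 0), segment ℝ 0 (|C' j i| • gen' i)
    ∀ x : EuclideanSpace ℝ (Fin d), ‖x‖ ≤ r →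
      ∑ j, |v j x - v' j x| ≤
        Real.sqrt (r ^ 2 + 1) *
          ∑ j, (Metric.hausdorffDist (P j) (P' j) + Metric.hausdorffDist (Q j) (Q' j)) := by
  intro W gen gen' v v' P Q P' Q' x hx
  let u : W := WithLp.toLp 2 (x, 1)
  have hv (j : Fin m) : v j x = ∑ i, C j i * max ⟪u, gen i⟫ 0 := by
    refine sum_congr rfl fun i _ => ?_
    rw [← inner_toLp_prod_one x (a i) (b i)]
    rfl
  have hv' (j : Fin m) : v' j x = ∑ i, C' j i * max ⟪u, gen' i⟫ 0 := by
    refine sum_congr rfl fun i _ => ?_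
    rw [← inner_toLp_prod_one x (a' i) (b' i)]
    rfl
  have hu : ‖u‖ ≤ √(r ^ 2 + 1) := by
    rw [norm_toLp_prod_one]
    gcongr
  calc ∑ j, |v j x - v' j x|
      ≤ ∑ j, (hausdorffDist (P j) (P' j) + hausdorffDist (Q j) (Q' j)) * ‖u‖ :=
        sum_le_sum fun j _ => hv j ▸ hv' j ▸ abs_sum_mul_relu_inner_sub_le u (C j) gen (C' j) gen'
    _ = ‖u‖ * ∑ j, (hausdorffDist (P j) (P' j) + hausdorffDist (Q j) (Q' j)) := by
        rw [← sum_mul, mul_comm]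
    _ ≤ √(r ^ 2 + 1) * ∑ j, (hausdorffDist (P j) (P' j) + hausdorffDist (Q j) (Q' j)) :=
        mul_le_mul_of_nonneg_right hu <| sum_nonneg fun j _ =>
          add_nonneg hausdorffDist_nonneg hausdorffDist_nonneg

/-- Bound for multi-output single-hidden-layer ReLU networks: with `v_j = p_j - q_j` and
positive/negative zonotopes `P_j, Q_j` (Minkowski sums of the positive/negative generators
`|c_{ji}|·(aᵢ, bᵢ)` in `ℝ^{d+1}` with the Euclidean norm), for all `x` in the ball of
radius `r`, `‖v(x) - ṽ(x)‖₁ ≤ ρ · ∑_j (H(P_j, P̃_j) + H(Q_j, Q̃_j))`, `ρ = √(r² + 1)`. -/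
theorem relu_network_L1_bound_hausdorff {d n n' m : ℕ} (r : ℝ) (hr : 0 < r)
    (a : Fin n → EuclideanSpace ℝ (Fin d)) (b : Fin n → ℝ) (C : Fin m → Fin n → ℝ)
    (a' : Fin n' → EuclideanSpace ℝ (Fin d)) (b' : Fin n' → ℝ) (C' : Fin m → Fin n' → ℝ) :
    let W := WithLp 2 (EuclideanSpace ℝ (Fin d) × ℝ)
    let gen : Fin n → W := fun i => (WithLp.equiv 2 _).symm (a i, b i)
    let gen' : Fin n' → W := fun i => (WithLp.equiv 2 _).symm (a' i, b' i)
    let v : Fin m → EuclideanSpace ℝ (Fin d) → ℝ :=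
      fun j x => ∑ i, C j i * max ((inner ℝ (a i) x : ℝ) + b i) 0
    let v' : Fin m → EuclideanSpace ℝ (Fin d) → ℝ :=
      fun j x => ∑ i, C' j i * max ((inner ℝ (a' i) x : ℝ) + b' i) 0
    let P : Fin m → Set W := fun j =>
      ∑ i ∈ Finset.univ.filter (fun i => 0 < C j i), segment ℝ 0 (C j i • gen i)
    let Q : Fin m → Set W := fun j =>
      ∑ i ∈ Finset.univ.filter (fun i => C j i < 0), segment ℝ 0 (|C j i| • gen i)
    let P' : Fin m → Set W := fun j =>
      ∑ i ∈ Finset.univ.filter (fun i => 0 < C' j i), segment ℝ 0 (C' j i • gen' i)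
    let Q' : Fin m → Set W := fun j =>
      ∑ i ∈ Finset.univ.filter (fun i => C' j i < 0), segment ℝ 0 (|C' j i| • gen' i)
    ∀ x : EuclideanSpace ℝ (Fin d), ‖x‖ ≤ r →
      ∑ j, |v j x - v' j x| ≤
        Real.sqrt (r ^ 2 + 1) *
          ∑ j, (Metric.hausdorffDist (P j) (P' j) + Metric.hausdorffDist (Q j) (Q' j)) :=
  relu_network_L1_bound_hausdorff_general r a b C a' b' C'
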